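/- In the transitive tournament on n ≥ 3 vertices v_1,...,v_n (with arcs v_i → v_j whenever i < j), every vertex belongs to every monitoring arc-geodetic set; hence its monitoring arc-geodetic number is n, and consequently mag^+(K_n) = n. -/

import Mathlib

/-!
In a transitive digraph any walk from `x` to `y ≠ x` can be shortcut to the arc `x → y`, so the
only geodesic between distinct vertices is a single arc. A pair of vertices therefore monitors
exactly the arc joining them, and every MAG-set contains both ends of every arc. In a transitive
tournament on at least two vertices every vertex is the end of some arc, so the whole vertex set
is the only MAG-set; since `mag` never exceeds the number of vertices, `mag⁺(Kₙ) = n`.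
-/

namespace MAG

variable {V : Type*}

/-- Directed walk from `x` to `y` whose list of visited vertices is `l`. -/
inductive DWalk (A : V → V → Prop) : V → V → List V → Prop
  | nil (v : V) : DWalk A v v [v]
  | cons {u v w : V} {l : List V} (h : A u v) (p : DWalk A v w l) :
      DWalk A u w (u :: l)

/-- The arc `(a, b)` lies on the walk with vertex list `l`. -/
def ArcOn (a b : V) (l : List V) : Prop :=
  ∃ l₁ l₂ : List V, l = l₁ ++ a :: b :: l₂

/-- `l` is (the vertex list of) a shortest directed walk from `x` to `y`. -/
def IsShortest (A : V → V → Prop) (x y : V) (l : List V) : Prop :=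
  DWalk A x y l ∧ ∀ l' : List V, DWalk A x y l' → l.length ≤ l'.length

/-- `x` and `y` monitor the arc `(a, b)`: the arc lies on every shortest
directed path from `x` to `y` (and such a path exists), or symmetrically
from `y` to `x`. -/
def Monitors (A : V → V → Prop) (x y a b : V) : Prop :=
  ((∃ l, IsShortest A x y l) ∧ ∀ l, IsShortest A x y l → ArcOn a b l) ∨
  ((∃ l, IsShortest A y x l) ∧ ∀ l, IsShortest A y x l → ArcOn a b l)

/-- A monitoring arc-geodetic set of the digraph `A`. -/
def IsMAGSet (A : V → V → Prop) (M : Set V) : Prop :=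
  ∀ a b : V, A a b → ∃ x ∈ M, ∃ y ∈ M, x ≠ y ∧ Monitors A x y a b

/-- The monitoring arc-geodetic number of the digraph `A`. -/
noncomputable def mag (A : V → V → Prop) [Fintype V] : ℕ :=
  sInf {n | ∃ M : Finset V, IsMAGSet A (M : Set V) ∧ M.card = n}

/-- `A` is an orientation of the undirected simple graph `G`. -/
structure IsOrientation (G : SimpleGraph V) (A : V → V → Prop) : Prop where
  adj_iff : ∀ u v : V, G.Adj u v ↔ (A u v ∨ A v u)
  asymm : ∀ u v : V, A u v → ¬ A v u

/-- The lower monitoring arc-geodetic number of `G`. -/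
noncomputable def magMinus (G : SimpleGraph V) [Fintype V] : ℕ :=
  sInf {n | ∃ A : V → V → Prop, IsOrientation G A ∧ mag A = n}

/-- The upper monitoring arc-geodetic number of `G`. -/
noncomputable def magPlus (G : SimpleGraph V) [Fintype V] : ℕ :=
  sSup {n | ∃ A : V → V → Prop, IsOrientation G A ∧ mag A = n}

/-- A source: a vertex with no in-neighbours. -/
def IsSource (A : V → V → Prop) (v : V) : Prop := ∀ w, ¬ A w v

/-- A sink: a vertex with no out-neighbours. -/
def IsSink (A : V → V → Prop) (v : V) : Prop := ∀ w, ¬ A v w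

/-- An oriented graph: no loops and no pair of opposite arcs. -/
def IsOrientedGraph (A : V → V → Prop) : Prop :=
  (∀ v, ¬ A v v) ∧ ∀ u v : V, A u v → ¬ A v u

/-- The underlying undirected graph of `A` is connected. -/
def IsConnectedDigraph (A : V → V → Prop) : Prop :=
  ∀ x y : V, Relation.ReflTransGen (fun a b => A a b ∨ A b a) x y

theorem DWalk.two_le_length {A : V → V → Prop} {x y : V} {l : List V}
    (hw : DWalk A x y l) (hxy : x ≠ y) : 2 ≤ l.length := by
  cases hw with
  | nil => exact absurd rfl hxy
  | cons _ p => cases p <;> simp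

theorem DWalk.eq_pair_of_length_le_two {A : V → V → Prop} {x y : V} {l : List V}
    (hw : DWalk A x y l) (hl : l.length ≤ 2) (hxy : x ≠ y) : l = [x, y] := by
  cases hw with
  | nil => exact absurd rfl hxy
  | cons _ p =>
    cases p with
    | nil => rfl
    | cons _ p => cases p <;> simp at hl

theorem isShortest_iff_eq_pair {A : V → V → Prop} {x y : V} {l : List V}
    (hA : A x y) (hxy : x ≠ y) : IsShortest A x y l ↔ l = [x, y] := by
  have hpair : DWalk A x y [x, y] := .cons hA (.nil y)
  constructor
  · rintro ⟨hw, hmin⟩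
    exact hw.eq_pair_of_length_le_two (hmin _ hpair) hxy
  · rintro rfl
    exact ⟨hpair, fun _ hw => hw.two_le_length hxy⟩

theorem arcOn_pair_iff {a b u v : V} : ArcOn a b [u, v] ↔ a = u ∧ b = v := by
  constructor
  · rintro ⟨l₁, l₂, h⟩
    rcases l₁ with _ | ⟨_, _ | _⟩ <;> simp at h
    exact ⟨h.1.symm, h.2.1.symm⟩
  · rintro ⟨rfl, rfl⟩
    exact ⟨[], [], rfl⟩

theorem DWalk.eq_or_rel {A : V → V → Prop} [IsTrans V A] {x y : V} {l : List V}
    (hw : DWalk A x y l) : x = y ∨ A x y := by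
  induction hw with
  | nil => exact .inl rfl
  | cons h _ ih => rcases ih with rfl | h' <;> [exact .inr h; exact .inr (trans_of A h h')]

theorem Monitors.eq_or_eq {A : V → V → Prop} [IsTrans V A] {x y a b : V} (hxy : x ≠ y)
    (h : Monitors A x y a b) : (a = x ∧ b = y) ∨ (a = y ∧ b = x) := by
  have key : ∀ {u v : V}, u ≠ v →
      (∃ l, IsShortest A u v l) ∧ (∀ l, IsShortest A u v l → ArcOn a b l) →
        a = u ∧ b = v := by
    rintro u v huv ⟨⟨l, hl⟩, hall⟩
    have huv' : A u v := hl.1.eq_or_rel.resolve_left huv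
    exact arcOn_pair_iff.1 (hall _ ((isShortest_iff_eq_pair huv' huv).2 rfl))
  exact h.imp (key hxy) (key hxy.symm)

theorem IsMAGSet.mem_of_rel {A : V → V → Prop} [IsTrans V A] {M : Set V} (hM : IsMAGSet A M)
    {a b : V} (hab : A a b) : a ∈ M ∧ b ∈ M := by
  obtain ⟨x, hx, y, hy, hxy, hmon⟩ := hM a b hab
  rcases hmon.eq_or_eq hxy with ⟨rfl, rfl⟩ | ⟨rfl, rfl⟩
  exacts [⟨hx, hy⟩, ⟨hy, hx⟩]

theorem isMAGSet_univ {A : V → V → Prop} [Std.Irrefl A] : IsMAGSet A Set.univ := by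
  intro a b hab
  have hne : a ≠ b := by rintro rfl; exact irrefl_of A a hab
  refine ⟨a, trivial, b, trivial, hne,
    .inl ⟨⟨_, (isShortest_iff_eq_pair hab hne).2 rfl⟩, ?_⟩⟩
  intro l hl
  rw [isShortest_iff_eq_pair hab hne] at hl
  exact hl ▸ arcOn_pair_iff.2 ⟨rfl, rfl⟩

theorem isMAGSet_lt_iff [LinearOrder V] [Nontrivial V] {M : Set V} :
    IsMAGSet (· < ·) M ↔ M = Set.univ := by
  refine ⟨fun hM => Set.eq_univ_of_forall fun v => ?_, fun h => h ▸ isMAGSet_univ⟩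
  obtain ⟨w, hw⟩ := exists_ne v
  rcases hw.lt_or_gt with h | h
  exacts [(hM.mem_of_rel h).2, (hM.mem_of_rel h).1]

theorem isOrientation_top_lt [LinearOrder V] : IsOrientation (⊤ : SimpleGraph V) (· < ·) where
  adj_iff _ _ := by rw [SimpleGraph.top_adj, ne_iff_lt_or_gt]
  asymm _ _ := lt_asymm

section Finite

variable [Fintype V]

theorem mag_le_card (A : V → V → Prop) : mag A ≤ Fintype.card V := by
  rw [mag]
  rcases Set.eq_empty_or_nonempty
      {m | ∃ M : Finset V, IsMAGSet A (M : Set V) ∧ M.card = m} with h | ⟨_, M, hM, rfl⟩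
  · rw [h, Nat.sInf_empty]
    exact Nat.zero_le _
  · exact le_trans (Nat.sInf_le ⟨M, hM, rfl⟩) M.card_le_univ

theorem mag_eq_card_of_forall_isMAGSet_eq_univ {A : V → V → Prop} [Std.Irrefl A]
    (h : ∀ M : Set V, IsMAGSet A M → M = Set.univ) : mag A = Fintype.card V := by
  have hvalues :
      {m | ∃ M : Finset V, IsMAGSet A (M : Set V) ∧ M.card = m} = {Fintype.card V} := by
    ext m
    constructor
    · rintro ⟨M, hM, rfl⟩
      rw [Finset.coe_eq_univ.1 (h _ hM), Finset.card_univ, Set.mem_singleton_iff]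
    · rintro rfl
      exact ⟨Finset.univ, by simpa using isMAGSet_univ, Finset.card_univ⟩
  rw [mag, hvalues, csInf_singleton]

theorem mag_lt_eq_card [LinearOrder V] [Nontrivial V] :
    mag (· < · : V → V → Prop) = Fintype.card V :=
  mag_eq_card_of_forall_isMAGSet_eq_univ fun _ => isMAGSet_lt_iff.1

theorem magPlus_top_eq_card [LinearOrder V] [Nontrivial V] :
    magPlus (⊤ : SimpleGraph V) = Fintype.card V :=
  IsGreatest.csSup_eq ⟨⟨_, isOrientation_top_lt, mag_lt_eq_card⟩,
    fun _ ⟨A, _, hA⟩ => hA ▸ mag_le_card A⟩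

end Finite

/-- in the transitive tournament on `n ≥ 3` vertices, every
vertex belongs to every MAG-set; hence its `mag` is `n` and
`mag⁺(K_n) = n`. -/
theorem transitiveTournament_mag_eq_card (n : ℕ) (hn : 3 ≤ n) :
    (∀ M : Set (Fin n),
      IsMAGSet (fun i j : Fin n => i < j) M → M = Set.univ) ∧
    mag (fun i j : Fin n => i < j) = n ∧
    magPlus (⊤ : SimpleGraph (Fin n)) = n := by
  have : Nontrivial (Fin n) := Fin.nontrivial_iff_two_le.2 (by omega)
  refine ⟨fun _ => isMAGSet_lt_iff.1, ?_, ?_⟩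
  · simpa using mag_lt_eq_card (V := Fin n)
  · simpa using magPlus_top_eq_card (V := Fin n)

end MAG
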